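/- arXiv:1806.05306 — 4 statements merged into one kernel-verified Lean document; each statement's English description precedes it below -/
import Mathlib

section
/- Rickman's Hunting Lemma: For every dimension d ≥ 1 there exists a constant D = D(d) > 0, depending only on d, with the following property. If μ is a Borel measure on ℝ^d that is absolutely continuous with respect to Lebesgue measure, is finite on every ball, and satisfies μ(ℝ^d) = ∞, then for every M > 0 there exist a point a ∈ ℝ^d and a radius r > 0 such that μ(B(a,r)) ≥ M and μ(B(a,r)) ≤ D · μ(B(a, r/2)). -/
open MeasureTheory Metric

open scoped ENNReal

/-!
Let `N` balls of radius `r / 4` cover every ball of radius `r`, and suppose that no ball of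
measure `≥ M` satisfies `μ B(a, r) ≤ (N + 1) μ B(a, r / 2)`. In a ball of measure `≥ N M` the
heaviest of the `N` quarter balls `B(b, r / 4)` carries at least `1 / N` of the mass, hence
at least `M`, so the failure of doubling at `B(b, r / 2)` makes `B(b, r / 2)` heavier than
the original ball by the factor `(N + 1) / N`. Iterating from a ball of measure `≥ N M`
(which exists since `μ` is infinite) produces balls of radii `r / 2 ^ k` that all stay in a
fixed ball while their measures grow geometrically, contradicting finiteness on balls.
-/

/-- A weak form of the doubling property of a metric space. -/
def QuarterBallCovering (X : Type*) [PseudoMetricSpace X] (N : ℕ) : Prop :=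
  ∀ (a : X) (r : ℝ), 0 < r → ∃ s : Finset X, s.card ≤ N ∧ (∀ b ∈ s, dist b a ≤ r) ∧
    ball a r ⊆ ⋃ b ∈ s, ball b (r / 4)

theorem exists_quarterBallCovering (E : Type*) [NormedAddCommGroup E] [NormedSpace ℝ E]
    [ProperSpace E] : ∃ N, QuarterBallCovering E N := by
  classical
  obtain ⟨t, ht, hcover⟩ := (isCompact_closedBall (0 : E) 1).elim_nhds_subcover
    (fun y => ball y (1 / 4)) (fun y _ => ball_mem_nhds y (by norm_num))
  refine ⟨t.card, fun a r hr => ⟨t.image (fun y => a + r • y), Finset.card_image_le, ?_, ?_⟩⟩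
  · simp only [Finset.mem_image, forall_exists_index, and_imp, forall_apply_eq_imp_iff₂]
    intro y hy
    have hy1 : ‖y‖ ≤ 1 := mem_closedBall_zero_iff.1 (ht y hy)
    rw [dist_eq_norm, add_sub_cancel_left, norm_smul, Real.norm_of_nonneg hr.le]
    exact mul_le_of_le_one_right hr.le hy1
  · intro x hx
    have hx' : r⁻¹ • (x - a) ∈ closedBall (0 : E) 1 := by
      rw [mem_ball, dist_eq_norm] at hx
      rw [mem_closedBall_zero_iff, norm_smul, norm_inv, Real.norm_of_nonneg hr.le,
        inv_mul_le_iff₀ hr, mul_one]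
      exact hx.le
    obtain ⟨y, hy, hxy⟩ := Set.mem_iUnion₂.1 (hcover hx')
    refine Set.mem_iUnion₂.2 ⟨a + r • y, Finset.mem_image_of_mem _ hy, ?_⟩
    have hscale : x - (a + r • y) = r • (r⁻¹ • (x - a) - y) := by
      rw [smul_sub, smul_smul, mul_inv_cancel₀ hr.ne', one_smul, sub_add_eq_sub_sub]
    rw [mem_ball, dist_eq_norm] at hxy ⊢
    rw [hscale, norm_smul, Real.norm_of_nonneg hr.le]
    linarith [mul_lt_mul_of_pos_left hxy hr]

namespace QuarterBallCovering

variable {X : Type*} [PseudoMetricSpace X] {N : ℕ}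

theorem pos [Nonempty X] (h : QuarterBallCovering X N) : 0 < N := by
  obtain ⟨x⟩ := ‹Nonempty X›
  obtain ⟨s, hsN, -, hs⟩ := h x 1 one_pos
  obtain ⟨b, hb, -⟩ := Set.mem_iUnion₂.1 (hs (mem_ball_self one_pos))
  exact (Finset.card_pos.2 ⟨b, hb⟩).trans_le hsN

variable [MeasurableSpace X]

theorem exists_measure_ball_le_mul (h : QuarterBallCovering X N) (μ : Measure X) (a : X)
    {r : ℝ} (hr : 0 < r) : ∃ b, dist b a ≤ r ∧ μ (ball a r) ≤ N * μ (ball b (r / 4)) := by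
  obtain ⟨s, hsN, hs, hcover⟩ := h a r hr
  have hsum : μ (ball a r) ≤ ∑ b ∈ s, μ (ball b (r / 4)) :=
    (measure_mono hcover).trans (measure_biUnion_finset_le s _)
  rcases s.eq_empty_or_nonempty with rfl | hne
  · have hzero : μ (ball a r) = 0 := by simpa using hsum
    exact ⟨a, dist_self a ▸ hr.le, by simp [hzero]⟩
  obtain ⟨b, hb, hmax⟩ := s.exists_max_image (fun b => μ (ball b (r / 4))) hne
  refine ⟨b, hs b hb, ?_⟩
  calc μ (ball a r) ≤ s.card • μ (ball b (r / 4)) := hsum.trans (s.sum_le_card_nsmul _ _ hmax)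
    _ ≤ N * μ (ball b (r / 4)) := by rw [nsmul_eq_mul]; gcongr

end QuarterBallCovering

theorem ENNReal.eq_zero_of_succ_mul_le_mul {N : ℕ} {m T : ℝ≥0∞} {x : ℕ → ℝ≥0∞} (hT : T ≠ ∞)
    (hm : ∀ k, m ≤ x k) (hxT : ∀ k, x k ≤ T) (hx : ∀ k, (N + 1) * x k ≤ N * x (k + 1)) :
    m = 0 := by
  have hlin : ∀ k : ℕ, k * m ≤ N * x k := by
    intro k
    induction k with
    | zero => simp
    | succ k ih =>
      calc ((k + 1 : ℕ) : ℝ≥0∞) * m = k * m + m := by push_cast; ring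
        _ ≤ N * x k + x k := add_le_add ih (hm k)
        _ = (N + 1) * x k := by ring
        _ ≤ N * x (k + 1) := hx k
  by_contra hm₀
  obtain ⟨k, hk⟩ := ENNReal.exists_nat_mul_gt hm₀ (ENNReal.mul_ne_top (ENNReal.natCast_ne_top N) hT)
  exact (hk.trans_le ((hlin k).trans (by gcongr; exact hxT k))).false

section Hunting

variable {X : Type*} [PseudoMetricSpace X] [MeasurableSpace X] {μ : Measure X}

theorem measure_ball_lt_of_exists_heavier_half_ball (hfin : ∀ a r, μ (ball a r) ≠ ∞) {N : ℕ}
    {m : ℝ≥0∞} (hm : m ≠ 0)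
    (hstep : ∀ (a : X) (r : ℝ), 0 < r → m ≤ μ (ball a r) →
      ∃ b, dist b a ≤ r ∧ (N + 1) * μ (ball a r) ≤ N * μ (ball b (r / 2)))
    (a : X) {r : ℝ} (hr : 0 < r) : μ (ball a r) < m := by
  by_contra! ha
  choose next hnext_dist hnext_mul using hstep
  let HeavyBall := {p : X × ℝ // 0 < p.2 ∧ m ≤ μ (ball p.1 p.2)}
  have hle_of_growth : ∀ {x y : ℝ≥0∞}, (N + 1) * x ≤ N * y → x ≤ y := fun h =>
    (ENNReal.mul_le_mul_iff_right (by simp) (by simp)).1 (h.trans (by gcongr; exact le_self_add))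
  let halve : HeavyBall → HeavyBall := fun p =>
    ⟨(next _ _ p.2.1 p.2.2, p.1.2 / 2), half_pos p.2.1, p.2.2.trans (hle_of_growth (hnext_mul ..))⟩
  let B : ℕ → HeavyBall := fun k => halve^[k] ⟨(a, r), hr, ha⟩
  have hB : ∀ k, B (k + 1) = halve (B k) := fun k => Function.iterate_succ_apply' _ _ _
  -- Each centre moves by at most the current radius, which then halves.
  have hanti : Antitone fun k => dist (B k).1.1 a + 2 * (B k).1.2 := by
    refine antitone_nat_of_succ_le fun k => ?_
    rw [hB]
    have hmove := hnext_dist _ _ (B k).2.1 (B k).2.2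
    have htri := dist_triangle (halve (B k)).1.1 (B k).1.1 a
    change dist (halve (B k)).1.1 a + 2 * ((B k).1.2 / 2) ≤ _
    linarith
  have hsub : ∀ k, ball (B k).1.1 (B k).1.2 ⊆ ball a (2 * r) := by
    intro k
    have h0 : dist (B 0).1.1 a + 2 * (B 0).1.2 = 2 * r := by simp [B]
    have hk := hanti (Nat.zero_le k)
    have hpos := (B k).2.1
    exact ball_subset_ball' (by simp only at hk; linarith)
  refine hm (ENNReal.eq_zero_of_succ_mul_le_mul (N := N) (hfin a (2 * r)) (fun k => (B k).2.2)
    (fun k => measure_mono (hsub k)) fun k => ?_)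
  rw [hB]
  exact hnext_mul _ _ _ _

theorem exists_le_measure_ball (hinf : μ Set.univ = ∞) {m : ℝ≥0∞} (hm : m ≠ ∞) (x : X) :
    ∃ r, 0 < r ∧ m ≤ μ (ball x r) := by
  have hmono : Monotone fun n : ℕ => ball x (n + 1) := fun i j hij =>
    ball_subset_ball (by gcongr)
  have hsup := hmono.measure_iUnion (μ := μ)
  rw [iUnion_ball_nat_succ, hinf] at hsup
  obtain ⟨n, hn⟩ := lt_iSup_iff.1 (hsup ▸ hm.lt_top)
  exact ⟨n + 1, by positivity, hn.le⟩

theorem QuarterBallCovering.exists_ball_doubling {N : ℕ} (h : QuarterBallCovering X N)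
    (hfin : ∀ a r, μ (ball a r) ≠ ∞) (hinf : μ Set.univ = ∞) {m : ℝ≥0∞} (hm : m ≠ ∞) :
    ∃ a r, 0 < r ∧ m ≤ μ (ball a r) ∧ μ (ball a r) ≤ (N + 1) * μ (ball a (r / 2)) := by
  wlog hm₀ : m ≠ 0 generalizing m
  · obtain ⟨a, r, hr, -, hdoubling⟩ := this ENNReal.one_ne_top one_ne_zero
    exact ⟨a, r, hr, by simp [not_not.1 hm₀], hdoubling⟩
  obtain ⟨x, -⟩ := nonempty_of_measure_ne_zero (hinf ▸ ENNReal.top_ne_zero : μ Set.univ ≠ 0)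
  have : Nonempty X := ⟨x⟩
  have hN : (N : ℝ≥0∞) ≠ 0 := by simpa using h.pos.ne'
  by_contra! hcon
  obtain ⟨r, hr, hNm⟩ :=
    exists_le_measure_ball hinf (ENNReal.mul_ne_top (ENNReal.natCast_ne_top N) hm) x
  refine (measure_ball_lt_of_exists_heavier_half_ball (N := N) hfin (mul_ne_zero hN hm₀) ?_ x
    hr).not_ge hNm
  intro a r hr hNm
  obtain ⟨b, hba, hab⟩ := h.exists_measure_ball_le_mul μ a hr
  have hb : m ≤ μ (ball b (r / 4)) :=
    (ENNReal.mul_le_mul_iff_right hN (by simp)).1 (hNm.trans hab)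
  have hgrow := hcon b (r / 2) (half_pos hr)
    (hb.trans (measure_mono (ball_subset_ball (by linarith))))
  rw [show r / 2 / 2 = r / 4 by ring] at hgrow
  refine ⟨b, hba, ?_⟩
  calc (N + 1) * μ (ball a r) ≤ (N + 1) * (N * μ (ball b (r / 4))) := by gcongr
    _ = N * ((N + 1) * μ (ball b (r / 4))) := by ring
    _ ≤ N * μ (ball b (r / 2)) := by gcongr

end Hunting

theorem rickman_hunting_lemma_general (d : ℕ) :
    ∃ D : ℝ, 0 < D ∧
      ∀ μ : Measure (EuclideanSpace ℝ (Fin d)),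
        μ ≪ (volume : Measure (EuclideanSpace ℝ (Fin d))) →
        (∀ (a : EuclideanSpace ℝ (Fin d)) (r : ℝ), μ (ball a r) < ⊤) →
        μ Set.univ = ⊤ →
        ∀ M : ℝ, 0 < M →
          ∃ (a : EuclideanSpace ℝ (Fin d)) (r : ℝ), 0 < r ∧
            ENNReal.ofReal M ≤ μ (ball a r) ∧
            μ (ball a r) ≤ ENNReal.ofReal D * μ (ball a (r / 2)) := by
  obtain ⟨N, hN⟩ := exists_quarterBallCovering (EuclideanSpace ℝ (Fin d))
  refine ⟨N + 1, by positivity, fun μ _ hfin hinf M _ => ?_⟩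
  have hD : ENNReal.ofReal (N + 1) = N + 1 := by
    rw [ENNReal.ofReal_add (by positivity) zero_le_one, ENNReal.ofReal_natCast, ENNReal.ofReal_one]
  rw [hD]
  exact hN.exists_ball_doubling (fun a r => (hfin a r).ne) hinf ENNReal.ofReal_ne_top

/-- **Rickman's Hunting Lemma.** For every dimension `d ≥ 1` there is a constant `D > 0`,
depending only on `d`, such that: if `μ` is a Borel measure on `ℝ^d` absolutely continuous
with respect to Lebesgue measure, finite on every ball, and with `μ(ℝ^d) = ∞`, then for
every `M > 0` there are `a ∈ ℝ^d` and `r > 0` with `μ(B(a,r)) ≥ M` and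
`μ(B(a,r)) ≤ D · μ(B(a,r/2))`. -/
theorem rickman_hunting_lemma (d : ℕ) (hd : 1 ≤ d) :
    ∃ D : ℝ, 0 < D ∧
      ∀ μ : Measure (EuclideanSpace ℝ (Fin d)),
        μ ≪ (volume : Measure (EuclideanSpace ℝ (Fin d))) →
        (∀ (a : EuclideanSpace ℝ (Fin d)) (r : ℝ), μ (ball a r) < ⊤) →
        μ Set.univ = ⊤ →
        ∀ M : ℝ, 0 < M →
          ∃ (a : EuclideanSpace ℝ (Fin d)) (r : ℝ), 0 < r ∧
            ENNReal.ofReal M ≤ μ (ball a r) ∧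
            μ (ball a r) ≤ ENNReal.ofReal D * μ (ball a (r / 2)) :=
  rickman_hunting_lemma_general d
end

section
/- Let F be a field, let V be a finite-dimensional vector space over F, and let W and Z be vector spaces over F. Let B : V → W → Z be a bilinear map, let k > dim V be a natural number, and let v_1, …, v_k ∈ V and w_1, …, w_k ∈ W be vectors such that B(v_i, w_j) = 0 whenever i ≠ j. Then there exists an index i with B(v_i, w_i) = 0. -/
/-- If `B : V → W → Z` is bilinear, `V` is finite-dimensional, `k > dim V`, and
`B (v i) (w j) = 0` whenever `i ≠ j`, then `B (v i) (w i) = 0` for some `i`. -/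
theorem exists_diag_pairing_zero_of_offdiag_zero
    (F : Type*) [Field F]
    (V W Z : Type*) [AddCommGroup V] [Module F V] [FiniteDimensional F V]
    [AddCommGroup W] [Module F W] [AddCommGroup Z] [Module F Z]
    (B : V →ₗ[F] W →ₗ[F] Z)
    (k : ℕ) (hk : Module.finrank F V < k)
    (v : Fin k → V) (w : Fin k → W)
    (h : ∀ i j : Fin k, i ≠ j → B (v i) (w j) = 0) :
    ∃ i : Fin k, B (v i) (w i) = 0 := by
  have hdep : ¬ LinearIndependent F v := fun hli => by
    have := hli.fintype_card_le_finrank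
    simp at this
    omega
  obtain ⟨g, hg, i, hgi⟩ := Fintype.not_linearIndependent_iff.mp hdep
  refine ⟨i, ?_⟩
  have h0 : B (∑ j, g j • v j) (w i) = 0 := by rw [hg]; simp
  have : ∑ j, g j • B (v j) (w i) = 0 := by
    simpa using h0
  rw [Finset.sum_eq_single i] at this
  · exact (smul_eq_zero.mp this).resolve_left hgi
  · intro j _ hji; rw [h j i hji, smul_zero]
  · intro hi; exact absurd (Finset.mem_univ i) hi
end

section
/- Let d and l be natural numbers with l ≤ d, and let k > C(d,l) (the binomial coefficient 'd choose l'). Let η_1, …, η_k be elements of the l-th exterior power ⋀^l(ℝ^d) and θ_1, …, θ_k be elements of the (d−l)-th exterior power ⋀^{d−l}(ℝ^d), regarded as elements of the exterior algebra of ℝ^d. If η_i ∧ θ_j = 0 (the product in the exterior algebra) whenever i ≠ j, then there exists an index i with η_i ∧ θ_i = 0. -/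
open ExteriorAlgebra Module

variable (d l : ℕ)

noncomputable abbrev stdB : Fin d → (Fin d → ℝ) := fun i => Pi.basisFun ℝ (Fin d) i

noncomputable def fam (s : {s : Finset (Fin d) // s.card = l}) : ⋀[ℝ]^l (Fin d → ℝ) :=
  ⟨ιMulti_family ℝ l (stdB d) s, ιMulti_range ℝ l (Set.mem_range_self _)⟩

lemma ιMulti_mem_span (v : Fin l → (Fin d → ℝ)) :
    ιMulti ℝ l v ∈ Submodule.span ℝ (Set.range (ιMulti_family ℝ l (stdB d))) := by
  have hv : v = fun i => ∑ j : Fin d, v i j • stdB d j := by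
    funext i; exact ((Pi.basisFun ℝ (Fin d)).sum_repr (v i)).symm
  rw [hv]
  rw [show (ιMulti ℝ l (fun i => ∑ j : Fin d, v i j • stdB d j))
      = (ιMulti ℝ l).toMultilinearMap (fun i => ∑ j : Fin d, v i j • stdB d j) from rfl]
  rw [MultilinearMap.map_sum]
  apply Submodule.sum_mem
  intro r _
  rw [show (fun i => v i (r i) • stdB d (r i)) = (fun i => (fun i => v i (r i)) i • (fun i => stdB d (r i)) i) from rfl]
  rw [MultilinearMap.map_smul_univ]
  apply Submodule.smul_mem
  show (ιMulti ℝ l) (fun i => stdB d (r i)) ∈ _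
  by_cases hr : Function.Injective r
  · -- build the finset and permutation
    set s : Finset (Fin d) := Finset.image r Finset.univ with hs
    have hcard : s.card = l := by
      rw [hs, Finset.card_image_of_injective _ hr, Finset.card_univ, Fintype.card_fin]
    have hmem : ∀ i, r i ∈ s := fun i => Finset.mem_image_of_mem r (Finset.mem_univ i)
    set e := s.orderIsoOfFin hcard with he
    set σ' : Fin l → Fin l := fun i => e.symm ⟨r i, hmem i⟩ with hσ'
    have hσinj : Function.Injective σ' := by
      intro a b hab
      apply hr
      have h2 : (⟨r a, hmem a⟩ : {x // x ∈ s}) = ⟨r b, hmem b⟩ := e.symm.injective hab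
      exact congrArg Subtype.val h2
    let σ : Equiv.Perm (Fin l) := Equiv.ofBijective σ' (Finite.injective_iff_bijective.mp hσinj)
    have hre : ∀ i, stdB d (r i) = stdB d (e (σ i)) := by
      intro i
      have : (e (σ i) : Fin d) = r i := by
        show (e (σ' i) : Fin d) = r i
        rw [hσ', OrderIso.apply_symm_apply]
      rw [this]
    have : (ιMulti ℝ l (M := Fin d → ℝ)) (fun i => stdB d (r i))
        = (ιMulti ℝ l (M := Fin d → ℝ)) ((fun i => stdB d (e i)) ∘ σ) := by
      congr 1; funext i; exact hre i
    rw [this, AlternatingMap.map_perm]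
    apply Submodule.smul_mem
    exact Submodule.subset_span ⟨⟨s, hcard⟩, rfl⟩
  · have h0 : ¬Function.Injective (fun i => stdB d (r i)) := fun h =>
      hr (Function.Injective.of_comp (f := stdB d) h)
    rw [AlternatingMap.map_eq_zero_of_not_injective _ _ h0]
    exact Submodule.zero_mem _

lemma span_fam_top : Submodule.span ℝ (Set.range (fam d l)) = ⊤ := by
  apply Submodule.map_injective_of_injective (⋀[ℝ]^l (Fin d → ℝ)).injective_subtype
  rw [Submodule.map_span, Submodule.map_top, Submodule.range_subtype]
  have hcomp : ⇑(⋀[ℝ]^l (Fin d → ℝ)).subtype '' Set.range (fam d l)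
      = Set.range (ιMulti_family ℝ l (stdB d)) := by
    rw [← Set.range_comp]; rfl
  rw [hcomp]
  refine le_antisymm (Submodule.span_le.2 ?_) ?_
  · rintro x ⟨s, rfl⟩
    exact ιMulti_range ℝ l (Set.mem_range_self _)
  · rw [← ιMulti_span_fixedDegree]
    refine Submodule.span_le.2 ?_
    rintro x ⟨v, rfl⟩
    exact ιMulti_mem_span d l v

instance : Module.Finite ℝ (⋀[ℝ]^l (Fin d → ℝ)) := by
  rw [Module.finite_def, ← span_fam_top d l]
  exact Submodule.fg_span (Set.finite_range _)

lemma finrank_exteriorPower_le : Module.finrank ℝ (⋀[ℝ]^l (Fin d → ℝ)) ≤ d.choose l := by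
  have h := finrank_range_le_card (R := ℝ) (fam d l)
  rw [Set.finrank, span_fam_top, finrank_top] at h
  simpa [Fintype.card_finset_len, Fintype.card_fin] using h

/-- If `k > (d choose l)` and `η_1, …, η_k ∈ ⋀^l(ℝ^d)`, `θ_1, …, θ_k ∈ ⋀^{d-l}(ℝ^d)` satisfy
`η_i ∧ θ_j = 0` (in the exterior algebra of `ℝ^d`) whenever `i ≠ j`, then `η_i ∧ θ_i = 0`
for some `i`. -/
theorem exists_diag_wedge_zero_of_offdiag_wedge_zero
    (d l : ℕ) (hl : l ≤ d) (k : ℕ) (hk : Nat.choose d l < k)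
    (η : Fin k → ⋀[ℝ]^l (Fin d → ℝ)) (θ : Fin k → ⋀[ℝ]^(d - l) (Fin d → ℝ))
    (h : ∀ i j : Fin k, i ≠ j →
      (η i : ExteriorAlgebra ℝ (Fin d → ℝ)) * (θ j : ExteriorAlgebra ℝ (Fin d → ℝ)) = 0) :
    ∃ i : Fin k,
      (η i : ExteriorAlgebra ℝ (Fin d → ℝ)) * (θ i : ExteriorAlgebra ℝ (Fin d → ℝ)) = 0 := by
  classical
  have hdep : ¬ LinearIndependent ℝ η := by
    intro hind
    have h1 := hind.fintype_card_le_finrank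
    have h2 := finrank_exteriorPower_le d l
    rw [Fintype.card_fin] at h1
    omega
  obtain ⟨g, hsum, i, hgi⟩ := Fintype.not_linearIndependent_iff.mp hdep
  refine ⟨i, ?_⟩
  have hval : (∑ j, g j • (η j : ExteriorAlgebra ℝ (Fin d → ℝ))) = 0 := by
    have := congrArg Subtype.val hsum
    simpa using this
  have h2 : ∑ j, g j • ((η j : ExteriorAlgebra ℝ (Fin d → ℝ))
      * (θ i : ExteriorAlgebra ℝ (Fin d → ℝ))) = 0 := by
    calc ∑ j, g j • ((η j : ExteriorAlgebra ℝ (Fin d → ℝ))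
          * (θ i : ExteriorAlgebra ℝ (Fin d → ℝ)))
        = (∑ j, g j • (η j : ExteriorAlgebra ℝ (Fin d → ℝ)))
          * (θ i : ExteriorAlgebra ℝ (Fin d → ℝ)) := by
          rw [Finset.sum_mul]; simp [smul_mul_assoc]
      _ = 0 := by rw [hval, zero_mul]
  rw [Finset.sum_eq_single i] at h2
  · exact (smul_eq_zero.mp h2).resolve_left hgi
  · intro j _ hj
    rw [h j i hj, smul_zero]
  · intro hni
    exact absurd (Finset.mem_univ i) hni
end

section
/- Let d and l be natural numbers with l ≤ d, and let k > C(d,l) (the binomial coefficient 'd choose l'). Let η_1, …, η_k : B(0,1) → ⋀^l(ℝ^d) and θ_1, …, θ_k : B(0,1) → ⋀^{d−l}(ℝ^d) be functions on the open unit ball B(0,1) ⊂ ℝ^d such that for each pair i ≠ j one has η_i(x) ∧ θ_j(x) = 0 for Lebesgue-almost every x ∈ B(0,1). Then for Lebesgue-almost every x ∈ B(0,1) there exists an index i (depending on x) with η_i(x) ∧ θ_i(x) = 0. -/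
open MeasureTheory Metric

/-- More than `finrank K S` elements of `S` are linearly dependent; multiplying a nontrivial
relation `∑ c i • a i = 0` on the right by `t n` with `c n ≠ 0` kills every term but `a n * t n`. -/
theorem Submodule.exists_mul_eq_zero_of_mul_eq_zero_of_ne {K A ι : Type*} [Field K] [Ring A]
    [Algebra K A] [Fintype ι] (S : Submodule K A) [FiniteDimensional K S]
    (hcard : Module.finrank K S < Fintype.card ι) (a : ι → S) (t : ι → A)
    (h : ∀ i j, i ≠ j → (a i : A) * t j = 0) : ∃ i, (a i : A) * t i = 0 := by
  have hdep : ¬ LinearIndependent K a := fun hli => hcard.not_ge hli.fintype_card_le_finrank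
  obtain ⟨c, hc, n, hn⟩ := Fintype.not_linearIndependent_iff.1 hdep
  refine ⟨n, ?_⟩
  have hsum : (∑ i, c i • (a i : A)) * t n = c n • ((a n : A) * t n) := by
    rw [Finset.sum_mul, Finset.sum_eq_single n (fun i _ hin => by rw [smul_mul_assoc, h i n hin,
      smul_zero]) (fun hn' => absurd (Finset.mem_univ n) hn'), smul_mul_assoc]
  have hzero : (∑ i, c i • (a i : A)) = 0 := by
    simpa only [Submodule.coe_sum, Submodule.coe_smul, ZeroMemClass.coe_zero] using
      congrArg Subtype.val hc
  rw [hzero, zero_mul] at hsum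
  exact (smul_eq_zero.1 hsum.symm).resolve_left hn

theorem Filter.eventually_forall_ne {α ι : Type*} [Finite ι] {l : Filter α}
    {p : ι → ι → α → Prop} (h : ∀ i j, i ≠ j → ∀ᶠ x in l, p i j x) :
    ∀ᶠ x in l, ∀ i j, i ≠ j → p i j x := by
  refine Filter.eventually_all.2 fun i => Filter.eventually_all.2 fun j => ?_
  by_cases hij : i = j
  · exact Filter.Eventually.of_forall fun _ hne => absurd hij hne
  · filter_upwards [h i j hij] with x hx _ using hx

theorem ae_exists_diag_wedge_zero_of_offdiag_wedge_ae_zero_general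
    (d l : ℕ) (k : ℕ) (hk : Nat.choose d l < k)
    (η : Fin k → EuclideanSpace ℝ (Fin d) → ⋀[ℝ]^l (EuclideanSpace ℝ (Fin d)))
    (θ : Fin k → EuclideanSpace ℝ (Fin d) → ⋀[ℝ]^(d - l) (EuclideanSpace ℝ (Fin d)))
    (h : ∀ i j : Fin k, i ≠ j →
      ∀ᵐ x ∂(volume.restrict (ball (0 : EuclideanSpace ℝ (Fin d)) 1)),
        (η i x : ExteriorAlgebra ℝ (EuclideanSpace ℝ (Fin d))) * (θ j x) = 0) :
    ∀ᵐ x ∂(volume.restrict (ball (0 : EuclideanSpace ℝ (Fin d)) 1)),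
      ∃ i : Fin k,
        (η i x : ExteriorAlgebra ℝ (EuclideanSpace ℝ (Fin d))) * (θ i x) = 0 := by
  have hrank : Module.finrank ℝ (⋀[ℝ]^l (EuclideanSpace ℝ (Fin d))) < Fintype.card (Fin k) := by
    rwa [exteriorPower.finrank_eq, finrank_euclideanSpace_fin, Fintype.card_fin]
  filter_upwards [Filter.eventually_forall_ne h] with x hx
  exact Submodule.exists_mul_eq_zero_of_mul_eq_zero_of_ne _ hrank (fun i => η i x)
    (fun i => θ i x) hx

/-- If `k > (d choose l)` and `η_1, …, η_k : B(0,1) → ⋀^l(ℝ^d)`,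
`θ_1, …, θ_k : B(0,1) → ⋀^{d-l}(ℝ^d)` satisfy, for each `i ≠ j`,
`η_i(x) ∧ θ_j(x) = 0` for almost every `x` in the unit ball, then for almost every `x`
in the unit ball there is an index `i` with `η_i(x) ∧ θ_i(x) = 0`. -/
theorem ae_exists_diag_wedge_zero_of_offdiag_wedge_ae_zero
    (d l : ℕ) (hl : l ≤ d) (k : ℕ) (hk : Nat.choose d l < k)
    (η : Fin k → EuclideanSpace ℝ (Fin d) → ⋀[ℝ]^l (EuclideanSpace ℝ (Fin d)))
    (θ : Fin k → EuclideanSpace ℝ (Fin d) → ⋀[ℝ]^(d - l) (EuclideanSpace ℝ (Fin d)))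
    (h : ∀ i j : Fin k, i ≠ j →
      ∀ᵐ x ∂(volume.restrict (ball (0 : EuclideanSpace ℝ (Fin d)) 1)),
        (η i x : ExteriorAlgebra ℝ (EuclideanSpace ℝ (Fin d))) * (θ j x) = 0) :
    ∀ᵐ x ∂(volume.restrict (ball (0 : EuclideanSpace ℝ (Fin d)) 1)),
      ∃ i : Fin k,
        (η i x : ExteriorAlgebra ℝ (EuclideanSpace ℝ (Fin d))) * (θ i x) = 0 :=
  ae_exists_diag_wedge_zero_of_offdiag_wedge_ae_zero_general d l k hk η θ h
end
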